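/- For every natural number m, the cube of the m-th probabilists' Hermite polynomial satisfies the polynomial identity He_m(x)³ = Σ_{k₁=0}^{m} Σ_{k₂=0}^{min(2m−2k₁, m)} k₁! · k₂! · C(m,k₁)² · C(2m−2k₁, k₂) · C(m,k₂) · He_{3m−2k₁−2k₂}(x), where C(a,b) denotes the binomial coefficient. -/
import Mathlib


open Polynomial

/-- The `n`-th probabilists' Hermite polynomial, with real coefficients. -/
noncomputable def hermiteR (n : ℕ) : Polynomial ℝ :=
  (Polynomial.hermite n).map (Int.castRingHom ℝ)

lemma hermiteR_zero : hermiteR 0 = 1 := by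
  simp [hermiteR, hermite_zero]

lemma hermiteR_one : hermiteR 1 = X := by
  simp [hermiteR, hermite_one]

lemma hermiteR_succ (n : ℕ) :
    hermiteR (n + 1) = X * hermiteR n - derivative (hermiteR n) := by
  simp only [hermiteR, hermite_succ, Polynomial.map_sub, Polynomial.map_mul, Polynomial.map_X,
    derivative_map]

lemma deriv_hermiteR : ∀ n : ℕ, derivative (hermiteR (n + 1)) = C ((n : ℝ) + 1) * hermiteR n
  | 0 => by simp [hermiteR_one, hermiteR_zero]
  | 1 => by
      rw [hermiteR_succ 1, derivative_sub, derivative_mul, derivative_X, deriv_hermiteR 0]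
      simp [hermiteR_one, hermiteR_zero]
      ring
  | (n + 2) => by
      rw [hermiteR_succ (n + 2), derivative_sub, derivative_mul, derivative_X,
        deriv_hermiteR (n + 1)]
      rw [derivative_mul, derivative_C, deriv_hermiteR n, hermiteR_succ (n + 1),
        deriv_hermiteR n]
      push_cast
      simp only [map_add, map_one, map_ofNat]
      ring

lemma X_mul_hermiteR : ∀ n : ℕ, X * hermiteR n = hermiteR (n + 1) + C (n : ℝ) * hermiteR (n - 1)
  | 0 => by simp [hermiteR_one, hermiteR_zero]
  | (n + 1) => by
      rw [hermiteR_succ (n + 1), deriv_hermiteR n]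
      push_cast
      ring

lemma key_nat (m n k : ℕ) (hk : k ≤ m + 1) (hn : m + 2 ≤ n) :
    (k+1).factorial * (m+2).choose (k+1) * n.choose (k+1)
      + (m+1) * (k.factorial * m.choose k * n.choose k)
    = (k+1).factorial * (m+1).choose (k+1) * n.choose (k+1)
      + k.factorial * (m+1).choose k * n.choose k * (m+1+n-2*k) := by
  have hA : (m+1).choose k * (m+1-k) = (m+1) * m.choose k := by
    rw [Nat.add_one_mul_choose_eq m k, ← Nat.choose_succ_right_eq]
  have hB : n.choose k * (n-k) = n.choose (k+1) * (k+1) :=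
    (Nat.choose_succ_right_eq n k).symm
  rw [Nat.choose_succ_succ' (m+1) k, show m+1+n-2*k = (m+1-k)+(n-k) from by omega,
    Nat.factorial_succ]
  zify at hA hB ⊢
  linear_combination (-(k.factorial * n.choose k : ℤ)) * hA
    + (-(k.factorial * (m+1).choose k : ℤ)) * hB

lemma hermiteR_mul : ∀ m n : ℕ, m ≤ n →
    hermiteR m * hermiteR n = ∑ k ∈ Finset.range (m + 1),
      C ((k.factorial * m.choose k * n.choose k : ℕ) : ℝ) * hermiteR (m + n - 2 * k)
  | 0, n, _ => by
      simp [hermiteR_zero]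
  | 1, n, h => by
      rw [hermiteR_one, X_mul_hermiteR n, Finset.sum_range_succ, Finset.sum_range_one,
        show 1 + n - 2 * 0 = n + 1 from by omega, show 1 + n - 2 * 1 = n - 1 from by omega]
      simp [Nat.choose_one_right]
  | (m+2), n, h => by
      have IH1 := hermiteR_mul (m+1) n (by omega)
      have IH2 := hermiteR_mul m n (by omega)
      have rec2 : hermiteR (m+2) = X * hermiteR (m+1) - C ((m:ℝ)+1) * hermiteR m := by
        rw [hermiteR_succ (m+1), deriv_hermiteR m]
      rw [rec2, sub_mul, mul_assoc, IH1, mul_assoc, IH2, Finset.mul_sum, Finset.mul_sum]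
      have S1 : ∑ k ∈ Finset.range (m+2),
            X * (C ((k.factorial * (m+1).choose k * n.choose k : ℕ) : ℝ)
              * hermiteR (m+1+n-2*k))
          = ∑ k ∈ Finset.range (m+2),
            (C ((k.factorial * (m+1).choose k * n.choose k : ℕ) : ℝ)
                * hermiteR (m+2+n-2*k)
              + C (((k.factorial * (m+1).choose k * n.choose k : ℕ) : ℝ)
                  * ((m+1+n-2*k : ℕ) : ℝ)) * hermiteR (m+n-2*k)) := by
        refine Finset.sum_congr rfl fun k hk => ?_
        have hk' := Finset.mem_range.mp hk
        rw [mul_left_comm, X_mul_hermiteR (m+1+n-2*k),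
          show m+1+n-2*k+1 = m+2+n-2*k from by omega,
          show m+1+n-2*k-1 = m+n-2*k from by omega, map_mul]
        ring
      rw [S1, Finset.sum_add_distrib]
      have hA : ∑ k ∈ Finset.range (m+2),
            C ((k.factorial * (m+1).choose k * n.choose k : ℕ) : ℝ) * hermiteR (m+2+n-2*k)
          = C (((Nat.factorial 0 * (m+1).choose 0 * n.choose 0 : ℕ)) : ℝ) * hermiteR (m+2+n-2*0)
            + ∑ k ∈ Finset.range (m+2),
              C (((k+1).factorial * (m+1).choose (k+1) * n.choose (k+1) : ℕ) : ℝ)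
                * hermiteR (m+n-2*k) := by
        rw [Finset.sum_range_succ', add_comm]
        congr 1
        conv_rhs => rw [Finset.sum_range_succ]
        have hz : C ((((m+1)+1).factorial * (m+1).choose ((m+1)+1) * n.choose ((m+1)+1) : ℕ) : ℝ)
            * hermiteR (m+n-2*(m+1)) = 0 := by
          rw [Nat.choose_eq_zero_of_lt (by omega : m+1 < (m+1)+1)]
          simp
        rw [hz, add_zero]
        refine Finset.sum_congr rfl fun k hk => ?_
        have hk' := Finset.mem_range.mp hk
        rw [show m+2+n-2*(k+1) = m+n-2*k from by omega]
      have hT : ∑ k ∈ Finset.range (m+3),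
            C ((k.factorial * (m+2).choose k * n.choose k : ℕ) : ℝ) * hermiteR (m+2+n-2*k)
          = C (((Nat.factorial 0 * (m+2).choose 0 * n.choose 0 : ℕ)) : ℝ) * hermiteR (m+2+n-2*0)
            + ∑ k ∈ Finset.range (m+2),
              C (((k+1).factorial * (m+2).choose (k+1) * n.choose (k+1) : ℕ) : ℝ)
                * hermiteR (m+n-2*k) := by
        rw [Finset.sum_range_succ', add_comm]
        congr 1
        refine Finset.sum_congr rfl fun k hk => ?_
        have hk' := Finset.mem_range.mp hk
        rw [show m+2+n-2*(k+1) = m+n-2*k from by omega]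
      have hD : ∑ k ∈ Finset.range (m+1),
            C ((m:ℝ)+1) * (C ((k.factorial * m.choose k * n.choose k : ℕ) : ℝ)
              * hermiteR (m+n-2*k))
          = ∑ k ∈ Finset.range (m+2),
              C (((m:ℝ)+1) * ((k.factorial * m.choose k * n.choose k : ℕ) : ℝ))
                * hermiteR (m+n-2*k) := by
        conv_rhs => rw [Finset.sum_range_succ]
        have hz : C (((m:ℝ)+1) * (((m+1).factorial * m.choose (m+1) * n.choose (m+1) : ℕ) : ℝ))
            * hermiteR (m+n-2*(m+1)) = 0 := by
          rw [Nat.choose_eq_zero_of_lt (by omega : m < m+1)]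
          simp
        rw [hz, add_zero]
        refine Finset.sum_congr rfl fun k hk => ?_
        rw [map_mul]
        ring
      rw [hA, hT, hD]
      have main : ∑ k ∈ Finset.range (m+2),
            (C (((k+1).factorial * (m+1).choose (k+1) * n.choose (k+1) : ℕ) : ℝ)
                * hermiteR (m+n-2*k)
              + C (((k.factorial * (m+1).choose k * n.choose k : ℕ) : ℝ)
                  * ((m+1+n-2*k : ℕ) : ℝ)) * hermiteR (m+n-2*k)
              - C (((m:ℝ)+1) * ((k.factorial * m.choose k * n.choose k : ℕ) : ℝ))
                  * hermiteR (m+n-2*k))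
          = ∑ k ∈ Finset.range (m+2),
            C (((k+1).factorial * (m+2).choose (k+1) * n.choose (k+1) : ℕ) : ℝ)
                * hermiteR (m+n-2*k) := by
        refine Finset.sum_congr rfl fun k hk => ?_
        have hk' : k ≤ m + 1 := by
          have := Finset.mem_range.mp hk; omega
        have hco : (((k+1).factorial * (m+2).choose (k+1) * n.choose (k+1) : ℕ) : ℝ)
              + ((m:ℝ)+1) * ((k.factorial * m.choose k * n.choose k : ℕ) : ℝ)
            = (((k+1).factorial * (m+1).choose (k+1) * n.choose (k+1) : ℕ) : ℝ)
              + ((k.factorial * (m+1).choose k * n.choose k : ℕ) : ℝ)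
                * ((m+1+n-2*k : ℕ) : ℝ) := by
          exact_mod_cast congrArg (Nat.cast : ℕ → ℝ) (key_nat m n k hk' h)
        have hc2 : (((k+1).factorial * (m+1).choose (k+1) * n.choose (k+1) : ℕ) : ℝ)
              + ((k.factorial * (m+1).choose k * n.choose k : ℕ) : ℝ)
                * ((m+1+n-2*k : ℕ) : ℝ)
              - ((m:ℝ)+1) * ((k.factorial * m.choose k * n.choose k : ℕ) : ℝ)
            = (((k+1).factorial * (m+2).choose (k+1) * n.choose (k+1) : ℕ) : ℝ) := by
          linarith
        rw [← hc2, map_sub, map_add, map_mul, map_mul]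
        ring
      rw [← main, Finset.sum_sub_distrib, Finset.sum_add_distrib]
      simp only [Nat.factorial_zero, Nat.choose_zero_right, one_mul, mul_one, Nat.cast_one]
      ring

/-- The product formula for the cube of a Hermite polynomial:
`He_m(x)³ = ∑_{k₁=0}^{m} ∑_{k₂=0}^{min(2m-2k₁, m)}
  k₁! k₂! (m choose k₁)² (2m-2k₁ choose k₂) (m choose k₂) He_{3m-2k₁-2k₂}(x)`. -/
theorem hermite_cube_eq_sum (m : ℕ) :
    (hermiteR m) ^ 3 =
      ∑ k₁ ∈ Finset.range (m + 1), ∑ k₂ ∈ Finset.range (min (2 * m - 2 * k₁) m + 1),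
        Polynomial.C ((k₁.factorial : ℝ) * (k₂.factorial : ℝ) * (m.choose k₁ : ℝ) ^ 2 *
            ((2 * m - 2 * k₁).choose k₂ : ℝ) * (m.choose k₂ : ℝ)) *
          hermiteR (3 * m - 2 * k₁ - 2 * k₂) := by
  have h1 : hermiteR m ^ 3 = (hermiteR m * hermiteR m) * hermiteR m := by ring
  rw [h1, hermiteR_mul m m le_rfl, Finset.sum_mul]
  refine Finset.sum_congr rfl fun k₁ hk₁ => ?_
  have hk₁' := Finset.mem_range.mp hk₁
  rw [mul_assoc, show m + m - 2 * k₁ = 2 * m - 2 * k₁ from by omega]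
  by_cases hc : m ≤ 2 * m - 2 * k₁
  · have hmin : min (2 * m - 2 * k₁) m = m := by omega
    rw [hmin, mul_comm (hermiteR (2 * m - 2 * k₁)) (hermiteR m),
      hermiteR_mul m (2 * m - 2 * k₁) hc, Finset.mul_sum]
    refine Finset.sum_congr rfl fun k₂ hk₂ => ?_
    have hk₂' := Finset.mem_range.mp hk₂
    rw [show m + (2 * m - 2 * k₁) - 2 * k₂ = 3 * m - 2 * k₁ - 2 * k₂ from by omega,
      ← mul_assoc, ← map_mul]
    congr 1
    push_cast
    ring
  · have hc' : 2 * m - 2 * k₁ ≤ m := by omega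
    have hmin : min (2 * m - 2 * k₁) m = 2 * m - 2 * k₁ := by omega
    rw [hmin, hermiteR_mul (2 * m - 2 * k₁) m hc', Finset.mul_sum]
    refine Finset.sum_congr rfl fun k₂ hk₂ => ?_
    have hk₂' := Finset.mem_range.mp hk₂
    rw [show 2 * m - 2 * k₁ + m - 2 * k₂ = 3 * m - 2 * k₁ - 2 * k₂ from by omega,
      ← mul_assoc, ← map_mul]
    congr 1
    push_cast
    ring
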